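/- arXiv:2106.09510 — 2 statements merged into one kernel-verified Lean document; each statement's English description precedes it below -/
import Mathlib

section
/- (Special case of fractional Gronwall with zero inhomogeneity) Suppose b ≥ 0, β > 0, and x : [0,T] → ℝ is nonnegative, continuous, and satisfies x(t) ≤ b·∫₀ᵗ (t−s)^{β−1} x(s) ds for all t ∈ [0,T]. Then x(t) = 0 for all t ∈ [0,T]. -/
open MeasureTheory

/-- Fractional Gronwall inequality with zero inhomogeneity:
a nonnegative continuous solution of the homogeneous integral inequality vanishes. -/
theorem stmt_4 (b β T : ℝ) (hb : 0 ≤ b) (hβ : 0 < β) (hT : 0 < T)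
    (x : ℝ → ℝ) (hx_cont : ContinuousOn x (Set.Icc 0 T))
    (hx_nonneg : ∀ t ∈ Set.Icc (0:ℝ) T, 0 ≤ x t)
    (hineq : ∀ t ∈ Set.Icc (0:ℝ) T,
      x t ≤ b * ∫ s in (0:ℝ)..t, (t - s) ^ (β - 1) * x s) :
    ∀ t ∈ Set.Icc (0:ℝ) T, x t = 0 := by
  rcases eq_or_lt_of_le hb with hb0 | hbpos
  · intro t ht
    have h := hineq t ht
    rw [← hb0, zero_mul] at h
    exact le_antisymm h (hx_nonneg t ht)
  -- b > 0 : choose a small step δ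
  set δ : ℝ := (β / (2*b)) ^ (1/β) with hδdef
  have hδpos : 0 < δ := Real.rpow_pos_of_pos (by positivity) _
  have hδpow : δ ^ β = β / (2*b) := by
    rw [hδdef, ← Real.rpow_mul (by positivity), one_div, inv_mul_cancel₀ hβ.ne',
      Real.rpow_one]
  have hδkey : b * (δ ^ β) / β ≤ 1/2 := by
    rw [hδpow]
    have h : b * (β / (2*b)) / β = 1/2 := by field_simp
    rw [h]
  -- kernel integrability
  have hker : ∀ t p q : ℝ, IntervalIntegrable (fun s => (t - s) ^ (β-1)) volume p q := by
    intro t p q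
    have h : IntervalIntegrable (fun u : ℝ => u ^ (β-1)) volume (t - p) (t - q) :=
      intervalIntegral.intervalIntegrable_rpow' (by linarith)
    simpa using h.comp_sub_left t
  have hint : ∀ t p q : ℝ, p ∈ Set.Icc (0:ℝ) T → q ∈ Set.Icc (0:ℝ) T →
      IntervalIntegrable (fun s => (t - s) ^ (β-1) * x s) volume p q := by
    intro t p q hp hq
    exact (hker t p q).mul_continuousOn (hx_cont.mono (Set.uIcc_subset_Icc hp hq))
  -- integral of the kernel
  have hval : ∀ t p : ℝ, p ≤ t → (∫ s in p..t, (t - s) ^ (β-1)) = (t - p)^β / β := by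
    intro t p hpt
    rw [show (fun s => (t - s) ^ (β-1)) = fun s => ((fun u : ℝ => u ^ (β-1)) (t - s)) from rfl,
      intervalIntegral.integral_comp_sub_left (fun u : ℝ => u ^ (β-1)) t, sub_self,
      integral_rpow (Or.inl (by linarith)), Real.zero_rpow (by linarith : β - 1 + 1 ≠ 0)]
    rw [show β - 1 + 1 = β by ring]
    ring
  -- main induction
  have key : ∀ n : ℕ, ∀ t, t ∈ Set.Icc (0:ℝ) T → t ≤ (n:ℝ) * δ → x t = 0 := by
    intro n
    induction n with
    | zero =>
      intro t ht h0
      have ht0 : t = 0 := le_antisymm (by simpa using h0) ht.1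
      subst ht0
      have h := hineq 0 ht
      rw [intervalIntegral.integral_same, mul_zero] at h
      exact le_antisymm h (hx_nonneg 0 ht)
    | succ n ih =>
      intro t ht htn
      by_cases hcase : T ≤ (n:ℝ) * δ
      · exact ih t ht (ht.2.trans hcase)
      push_neg at hcase
      set a : ℝ := (n:ℝ) * δ with ha_def
      have ha0 : 0 ≤ a := by positivity
      set a' : ℝ := min (((n:ℝ)+1) * δ) T with ha'_def
      have ha'T : a' ≤ T := min_le_right _ _
      have ha'0 : 0 ≤ a' := le_min (by positivity) hT.le
      have htmem : t ∈ Set.Icc (0:ℝ) a' := ⟨ht.1, le_min (by push_cast at htn; linarith) ht.2⟩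
      obtain ⟨t₀, ht₀mem, ht₀max⟩ :=
        (isCompact_Icc (a := (0:ℝ)) (b := a')).exists_isMaxOn ⟨0, Set.left_mem_Icc.2 ha'0⟩
          (hx_cont.mono (Set.Icc_subset_Icc le_rfl ha'T))
      have ht₀T : t₀ ∈ Set.Icc 0 T := ⟨ht₀mem.1, ht₀mem.2.trans ha'T⟩
      suffices h0 : x t₀ = 0 by
        have hle := ht₀max htmem
        exact le_antisymm (h0 ▸ hle) (hx_nonneg t ht)
      by_cases hta : t₀ ≤ a
      · exact ih t₀ ht₀T hta
      push_neg at hta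
      have hx0 : ∀ s ∈ Set.Icc (0:ℝ) a, x s = 0 := fun s hs =>
        ih s ⟨hs.1, hs.2.trans hcase.le⟩ hs.2
      have haT : a ∈ Set.Icc (0:ℝ) T := ⟨ha0, hcase.le⟩
      have h0T : (0:ℝ) ∈ Set.Icc (0:ℝ) T := Set.left_mem_Icc.2 hT.le
      have int1 := hint t₀ 0 a h0T haT
      have int2 := hint t₀ a t₀ haT ht₀T
      have hzero : (∫ s in (0:ℝ)..a, (t₀ - s)^(β-1) * x s) = 0 := by
        rw [intervalIntegral.integral_congr (g := fun _ => (0:ℝ))]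
        · simp
        · intro s hs
          rw [Set.uIcc_of_le ha0] at hs
          simp only [hx0 s hs, mul_zero]
      have hsplit : (∫ s in (0:ℝ)..t₀, (t₀ - s)^(β-1) * x s)
          = ∫ s in a..t₀, (t₀ - s)^(β-1) * x s := by
        rw [← intervalIntegral.integral_add_adjacent_intervals int1 int2, hzero, zero_add]
      have hbound : (∫ s in a..t₀, (t₀ - s)^(β-1) * x s)
          ≤ ∫ s in a..t₀, (t₀ - s)^(β-1) * x t₀ := by
        apply intervalIntegral.integral_mono_on hta.le int2
          ((hker t₀ a t₀).mul_continuousOn continuousOn_const)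
        intro s hs
        have hxle : x s ≤ x t₀ := ht₀max ⟨hs.1.trans' ha0, hs.2.trans ht₀mem.2⟩
        have hk0 : 0 ≤ (t₀ - s)^(β-1) := Real.rpow_nonneg (by linarith [hs.2]) _
        exact mul_le_mul_of_nonneg_left hxle hk0
      have hconst : (∫ s in a..t₀, (t₀ - s)^(β-1) * x t₀) = (t₀ - a)^β / β * x t₀ := by
        rw [intervalIntegral.integral_mul_const, hval t₀ a hta.le]
      have hxt := hineq t₀ ht₀T
      have ht₀a' : t₀ ≤ a' := ht₀mem.2
      have hdle : t₀ - a ≤ δ := by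
        have : t₀ ≤ ((n:ℝ)+1) * δ := ht₀a'.trans (min_le_left _ _)
        rw [ha_def]; linarith
      have hδβ : (t₀ - a)^β ≤ δ^β := Real.rpow_le_rpow (by linarith) hdle hβ.le
      have hx0' : 0 ≤ x t₀ := hx_nonneg t₀ ht₀T
      rw [hsplit] at hxt
      have hstep1 : x t₀ ≤ b * ((t₀ - a)^β / β * x t₀) :=
        hxt.trans (le_of_le_of_eq (mul_le_mul_of_nonneg_left hbound hb) (by rw [hconst]))
      have hstep2 : b * ((t₀ - a)^β / β * x t₀) ≤ b * ((δ ^ β) / β * x t₀) := by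
        apply mul_le_mul_of_nonneg_left _ hb
        apply mul_le_mul_of_nonneg_right _ hx0'
        exact div_le_div_of_nonneg_right hδβ hβ.le
      have heq : b * ((δ ^ β) / β * x t₀) = (b * (δ ^ β) / β) * x t₀ := by ring
      have : x t₀ ≤ (1/2) * x t₀ :=
        (hstep1.trans (hstep2.trans_eq heq)).trans (mul_le_mul_of_nonneg_right hδkey hx0')
      linarith
  intro t ht
  obtain ⟨n, hn⟩ := exists_nat_ge (T / δ)
  refine key n t ht (ht.2.trans ?_)
  rw [div_le_iff₀ hδpos] at hn
  linarith
end

section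
/- Let 0 < μ < 1 and 0 < s₁ < s₂ ≤ T, and 0 < λ ≤ 1. Then ∫₀^{s₁} |s₂^{1−λ}(s₂−s)^{μ−1} − s₁^{1−λ}(s₁−s)^{μ−1}| ds → 0 as s₂ → s₁⁺ (with s₁ fixed). -/
open MeasureTheory intervalIntegral

/-- The integral of the difference of the singular kernels
`s₂^{1-λ}(s₂-s)^{μ-1}` and `s₁^{1-λ}(s₁-s)^{μ-1}` over `[0, s₁]` tends to `0`
as `s₂ → s₁⁺`. -/
theorem stmt_14 (μ lam T s₁ : ℝ) (hμ0 : 0 < μ) (hμ1 : μ < 1)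
    (hlam0 : 0 < lam) (hlam1 : lam ≤ 1) (hs₁ : 0 < s₁) (hT : s₁ < T) :
    Filter.Tendsto
      (fun s₂ : ℝ => ∫ s in (0:ℝ)..s₁,
        |s₂ ^ (1 - lam) * (s₂ - s) ^ (μ - 1) - s₁ ^ (1 - lam) * (s₁ - s) ^ (μ - 1)|)
      (nhdsWithin s₁ (Set.Ioi s₁)) (nhds 0) := by
  have hB : -1 < μ - 1 := by linarith
  have hBneg : μ - 1 ≤ 0 := by linarith
  have hA : 0 ≤ 1 - lam := by linarith
  have hint : ∀ c : ℝ, IntervalIntegrable (fun s => (c - s) ^ (μ - 1)) volume 0 s₁ := by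
    intro c
    have := (intervalIntegrable_rpow' (a := c - 0) (b := c - s₁) hB).comp_sub_left c
    simpa using this
  have hval : ∀ c : ℝ, (∫ s in (0:ℝ)..s₁, (c - s) ^ (μ - 1))
      = (c ^ μ - (c - s₁) ^ μ) / μ := by
    intro c
    rw [intervalIntegral.integral_comp_sub_left (fun u => u ^ (μ - 1)) c]
    rw [integral_rpow (Or.inl hB)]
    ring_nf
  set G : ℝ → ℝ := fun c =>
    (c ^ (1 - lam) - s₁ ^ (1 - lam)) * ((c ^ μ - (c - s₁) ^ μ) / μ)
      + s₁ ^ (1 - lam) * ((s₁ ^ μ - 0 ^ μ) / μ - (c ^ μ - (c - s₁) ^ μ) / μ) with hG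
  apply squeeze_zero' (g := G)
  · filter_upwards with c using
      intervalIntegral.integral_nonneg hs₁.le (fun u _ => abs_nonneg _)
  · filter_upwards [self_mem_nhdsWithin] with c hc
    have hc' : s₁ < c := hc
    -- integrabilities
    have I1 : IntervalIntegrable (fun s => c ^ (1 - lam) * (c - s) ^ (μ - 1)) volume 0 s₁ :=
      (hint c).const_mul _
    have I2 : IntervalIntegrable (fun s => s₁ ^ (1 - lam) * (s₁ - s) ^ (μ - 1)) volume 0 s₁ :=
      (hint s₁).const_mul _
    have Iabs : IntervalIntegrable
        (fun s => |c ^ (1 - lam) * (c - s) ^ (μ - 1) - s₁ ^ (1 - lam) * (s₁ - s) ^ (μ - 1)|)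
        volume 0 s₁ := (I1.sub I2).abs
    have I3 : IntervalIntegrable
        (fun s => (c ^ (1 - lam) - s₁ ^ (1 - lam)) * (c - s) ^ (μ - 1)
          + s₁ ^ (1 - lam) * ((s₁ - s) ^ (μ - 1) - (c - s) ^ (μ - 1))) volume 0 s₁ :=
      ((hint c).const_mul _).add (((hint s₁).sub (hint c)).const_mul _)
    have hle : (∫ s in (0:ℝ)..s₁,
        |c ^ (1 - lam) * (c - s) ^ (μ - 1) - s₁ ^ (1 - lam) * (s₁ - s) ^ (μ - 1)|)
        ≤ ∫ s in (0:ℝ)..s₁,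
          ((c ^ (1 - lam) - s₁ ^ (1 - lam)) * (c - s) ^ (μ - 1)
            + s₁ ^ (1 - lam) * ((s₁ - s) ^ (μ - 1) - (c - s) ^ (μ - 1))) := by
      refine intervalIntegral.integral_mono_ae_restrict hs₁.le Iabs I3 ?_
      have h1 : ∀ᵐ s ∂(volume.restrict (Set.Icc (0:ℝ) s₁)), s ∈ Set.Icc (0:ℝ) s₁ :=
        ae_restrict_mem measurableSet_Icc
      have h2 : ∀ᵐ s : ℝ ∂(volume.restrict (Set.Icc (0:ℝ) s₁)), s ≠ s₁ := by
        refine ae_restrict_of_ae ?_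
        simp [ae_iff]
      filter_upwards [h1, h2] with s hs hne
      have hss : s < s₁ := lt_of_le_of_ne hs.2 hne
      have hy : 0 < s₁ - s := by linarith
      have hx : 0 < c - s := by linarith
      have hxy : s₁ - s ≤ c - s := by linarith
      have e : c ^ (1 - lam) * (c - s) ^ (μ - 1) - s₁ ^ (1 - lam) * (s₁ - s) ^ (μ - 1)
          = (c ^ (1 - lam) - s₁ ^ (1 - lam)) * (c - s) ^ (μ - 1)
            + s₁ ^ (1 - lam) * ((c - s) ^ (μ - 1) - (s₁ - s) ^ (μ - 1)) := by ring
      rw [e]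
      refine (abs_add_le _ _).trans ?_
      gcongr
      · rw [abs_of_nonneg]
        exact mul_nonneg (sub_nonneg.mpr (Real.rpow_le_rpow hs₁.le hc'.le hA))
          (Real.rpow_nonneg hx.le _)
      · rw [abs_mul, abs_of_nonneg (Real.rpow_nonneg hs₁.le _), abs_sub_comm,
          abs_of_nonneg (sub_nonneg.mpr (Real.rpow_le_rpow_of_nonpos hy hxy hBneg))]
    refine hle.trans (le_of_eq ?_)
    rw [intervalIntegral.integral_add ((hint c).const_mul _)
        (((hint s₁).sub (hint c)).const_mul _),
      intervalIntegral.integral_const_mul, intervalIntegral.integral_const_mul,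
      intervalIntegral.integral_sub (hint s₁) (hint c), hval c, hval s₁, hG]
    simp only [sub_self]
  · -- G tends to 0
    have hGcont : ContinuousAt G s₁ := by
      have c1 : ContinuousAt (fun c : ℝ => c ^ (1 - lam)) s₁ :=
        Real.continuousAt_rpow_const s₁ _ (Or.inl hs₁.ne')
      have c2 : ContinuousAt (fun c : ℝ => c ^ μ) s₁ :=
        Real.continuousAt_rpow_const s₁ _ (Or.inl hs₁.ne')
      have c3 : ContinuousAt (fun c : ℝ => (c - s₁) ^ μ) s₁ :=
        ContinuousAt.rpow_const (by fun_prop) (Or.inr hμ0.le)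
      exact ((c1.sub continuousAt_const).mul ((c2.sub c3).div_const μ)).add
        (continuousAt_const.mul (continuousAt_const.sub ((c2.sub c3).div_const μ)))
    have := hGcont.tendsto.mono_left (nhdsWithin_le_nhds (s := Set.Ioi s₁))
    have hG0 : G s₁ = 0 := by
      simp [hG, Real.zero_rpow hμ0.ne']
    rwa [hG0] at this
end
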